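/- arXiv:1902.02025 — 2 statements merged into one kernel-verified Lean document; each statement's English description precedes it below -/
import Mathlib

section
/- Suppose B = (B¹(y), B²(y), 0) is a smooth vector field on ℝ² (viewed as z-independent, planar) depending only on y, which is divergence-free and satisfies B · ∇(∂_x B² − ∂_y B¹) = 0. Then B² is constant, and either B² = 0 (so B = f(y)∂_x for some smooth f), or B¹ is an affine function of y (so B = (c₁ y + c₀)∂_x + d ∂_y). -/
/-- Classification of translationally-symmetric planar stationary magnetic fields:
if `B = (B¹(y), B²(y), 0)` is smooth, divergence-free (`(B²)' = 0`) and satisfies the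
stationarity condition `B² · (B¹)'' = 0`, then `B²` is constant, and either `B² ≡ 0`
or `B¹` is affine. -/
theorem planar_stationary_classification (B1 B2 : ℝ → ℝ)
    (h1 : ContDiff ℝ (⊤ : ℕ∞) B1) (h2 : ContDiff ℝ (⊤ : ℕ∞) B2)
    (hdiv : ∀ y, deriv B2 y = 0)
    (hstat : ∀ y, B2 y * deriv (deriv B1) y = 0) :
    (∀ y y' : ℝ, B2 y = B2 y') ∧
    ((∀ y, B2 y = 0) ∨ ∃ c₁ c₀ : ℝ, ∀ y, B1 y = c₁ * y + c₀) := by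
  have hB2const : ∀ y y' : ℝ, B2 y = B2 y' := fun y y' =>
    is_const_of_deriv_eq_zero (h2.differentiable (by simp)) hdiv y y'
  refine ⟨hB2const, ?_⟩
  by_cases hz : B2 0 = 0
  · exact Or.inl fun y => (hB2const y 0).trans hz
  · right
    have hne : ∀ y, B2 y ≠ 0 := fun y => (hB2const y 0) ▸ hz
    have hsec : ∀ y, deriv (deriv B1) y = 0 := fun y =>
      (mul_eq_zero.mp (hstat y)).resolve_left (hne y)
    have hd1 : Differentiable ℝ (deriv B1) :=
      ((contDiff_infty_iff_deriv.mp (h1.of_le (by simp))).2).differentiable (by norm_num)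
    have hc1 : ∀ y, deriv B1 y = deriv B1 0 :=
      fun y => is_const_of_deriv_eq_zero hd1 hsec y 0
    set c₁ := deriv B1 0
    refine ⟨c₁, B1 0, fun y => ?_⟩
    have hg : ∀ y, deriv (fun t => B1 t - c₁ * t) y = 0 := by
      intro y
      have hD : HasDerivAt (fun t => B1 t - c₁ * t) (deriv B1 y - c₁ * 1) y :=
        ((h1.differentiable (by simp) y).hasDerivAt).sub ((hasDerivAt_id y).const_mul c₁)
      rw [hD.deriv]
      simp [hc1 y]
    have := is_const_of_deriv_eq_zero
      (Differentiable.sub (h1.differentiable (by simp)) (by fun_prop)) hg y 0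
    simp at this
    linarith
end

section
/- Consider the Hamiltonian p(x,ξ) = y(x) ξ₁ |ξ| on ℝ³ × ℝ³ with x = (x₁,y,x₃), and the bicharacteristic ODE Ẋ = ∇_ξ p(X,Ξ), Ξ̇ = −∇_x p(X,Ξ) with initial data X(0) = (0,1,0), Ξ(0) = (λ, −λ, 0) for λ > 0. Then the solution satisfies Ξ₂(t) = −λ sinh(λt + θ₀) and y(X(t)) = cosh(θ₀)/cosh(λt + θ₀), where θ₀ = sinh⁻¹(1) = log(1+√2). In particular y(X(t)) · |Ξ(t)| is conserved and |Ξ(t)| grows like λ e^{λt}. -/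
/-!
The momentum components `Ξ₁ = λ` and `Ξ₃ = 0` are conserved, so `u = -Ξ₂/λ` solves
`u' = λ √(1 + u²)`; thus `arsinh u` grows linearly with slope `λ`, giving
`u(t) = sinh(λt + arsinh 1)` and `|Ξ(t)| = λ cosh(λt + arsinh 1)`.
Since `Ẏ/Y = Ξ₁Ξ₂/|Ξ|` is exactly `-(d/dt)|Ξ| / |Ξ|`, the product `Y |Ξ|` is constant
(the conservation of `p = Y Ξ₁ |Ξ|`), which determines `Y`.
-/

open Real

theorem eq_of_forall_hasDerivAt_zero {𝕜 G : Type*} [RCLike 𝕜] [NormedAddCommGroup G]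
    [NormedSpace 𝕜 G] {f : 𝕜 → G} (hf : ∀ x, HasDerivAt f 0 x) (x y : 𝕜) : f x = f y :=
  is_const_of_deriv_eq_zero (fun z => (hf z).differentiableAt) (fun z => (hf z).deriv) x y

theorem eq_sinh_of_hasDerivAt_mul_sqrt_one_add_sq {u : ℝ → ℝ} {c : ℝ}
    (hu : ∀ t, HasDerivAt u (c * √(1 + u t ^ 2)) t) (t : ℝ) :
    u t = sinh (c * t + arsinh (u 0)) := by
  have hslope : ∀ s, HasDerivAt (fun s => arsinh (u s) - c * s) 0 s := fun s => by
    have hpos : √(1 + u s ^ 2) ≠ 0 := (sqrt_pos.mpr (by positivity)).ne'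
    refine ((hu s).arsinh.sub ((hasDerivAt_id s).const_mul c)).congr_deriv ?_
    rw [smul_eq_mul, mul_one, mul_comm c, inv_mul_cancel_left₀ hpos, sub_self]
  have h := eq_of_forall_hasDerivAt_zero hslope t 0
  simp only [mul_zero, sub_zero] at h
  rw [← sinh_arsinh (u t), sub_eq_iff_eq_add.mp h, add_comm]

theorem mul_eq_of_hasDerivAt_mul_of_hasDerivAt_neg_mul {f g a : ℝ → ℝ}
    (hf : ∀ t, HasDerivAt f (f t * a t) t) (hg : ∀ t, HasDerivAt g (-a t * g t) t)
    (s t : ℝ) : f s * g s = f t * g t :=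
  eq_of_forall_hasDerivAt_zero (fun x => by simpa [mul_assoc] using (hf x).mul (hg x)) s t

theorem sqrt_sq_add_sq_eq_mul_sqrt_one_add_div_sq {a : ℝ} (ha : 0 < a) (b : ℝ) :
    √(a ^ 2 + b ^ 2) = a * √(1 + (b / a) ^ 2) := by
  rw [← sqrt_sq ha.le, ← sqrt_mul (sq_nonneg a), sqrt_sq ha.le]
  congr 1
  field_simp

theorem bicharacteristic_instability_general (lam : ℝ) (hlam : 0 < lam)
    (Y Ξ1 Ξ2 Ξ3 nrm : ℝ → ℝ)
    (hnrm : ∀ t, nrm t = Real.sqrt (Ξ1 t ^ 2 + Ξ2 t ^ 2 + Ξ3 t ^ 2))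
    -- Hamiltonian ODE: Ẋ = ∇_ξ p(X,Ξ)
    (hY : ∀ t, HasDerivAt Y (Y t * (Ξ1 t * Ξ2 t / nrm t)) t)
    -- Hamiltonian ODE: Ξ̇ = −∇_x p(X,Ξ)
    (hΞ1 : ∀ t, HasDerivAt Ξ1 0 t)
    (hΞ2 : ∀ t, HasDerivAt Ξ2 (-(Ξ1 t * nrm t)) t)
    (hΞ3 : ∀ t, HasDerivAt Ξ3 0 t)
    -- initial data
    (hY0 : Y 0 = 1)
    (hΞ10 : Ξ1 0 = lam) (hΞ20 : Ξ2 0 = -lam) (hΞ30 : Ξ3 0 = 0) :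
    ∀ t : ℝ,
      Ξ2 t = -lam * Real.sinh (lam * t + Real.arsinh 1) ∧
      Y t = Real.cosh (Real.arsinh 1) / Real.cosh (lam * t + Real.arsinh 1) ∧
      Y t * nrm t = Y 0 * nrm 0 := by
  set θ := arsinh 1
  have hΞ1c (t : ℝ) : Ξ1 t = lam := hΞ10 ▸ eq_of_forall_hasDerivAt_zero hΞ1 t 0
  have hΞ3c (t : ℝ) : Ξ3 t = 0 := hΞ30 ▸ eq_of_forall_hasDerivAt_zero hΞ3 t 0
  have hnrm_sqrt (t : ℝ) : nrm t = lam * √(1 + (-Ξ2 t / lam) ^ 2) := by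
    rw [hnrm, hΞ1c, hΞ3c, ← sqrt_sq_add_sq_eq_mul_sqrt_one_add_div_sq hlam]
    ring_nf
  have hu (t : ℝ) : HasDerivAt (fun s => -Ξ2 s / lam) (lam * √(1 + (-Ξ2 t / lam) ^ 2)) t := by
    refine ((hΞ2 t).neg.div_const lam).congr_deriv ?_
    rw [hΞ1c, ← hnrm_sqrt]
    field_simp
  have hΞ2eq (t : ℝ) : Ξ2 t = -lam * sinh (lam * t + θ) := by
    have h := eq_sinh_of_hasDerivAt_mul_sqrt_one_add_sq hu t
    rw [hΞ20, neg_neg, div_self hlam.ne', div_eq_iff hlam.ne'] at h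
    linarith
  have hnrmeq : nrm = fun t => lam * cosh (lam * t + θ) := funext fun t => by
    rw [hnrm_sqrt, hΞ2eq, neg_mul, neg_neg, mul_div_cancel_left₀ _ hlam.ne', ← cosh_sq',
      sqrt_sq (cosh_pos _).le]
  have hconserved : ∀ s t, Y s * nrm s = Y t * nrm t := by
    refine mul_eq_of_hasDerivAt_mul_of_hasDerivAt_neg_mul hY fun t => ?_
    have hcosh := ((((hasDerivAt_id t).const_mul lam).add_const θ).cosh).const_mul lam
    rw [hnrmeq]
    refine hcosh.congr_deriv ?_
    rw [hΞ1c, hΞ2eq, id_eq]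
    field_simp [(cosh_pos (lam * t + θ)).ne']
  intro t
  refine ⟨hΞ2eq t, ?_, hconserved t 0⟩
  have h := hconserved t 0
  rw [hY0, hnrmeq] at h
  simp only [mul_zero, zero_add, one_mul] at h
  rw [eq_div_iff (cosh_pos _).ne']
  apply mul_left_cancel₀ hlam.ne'
  linarith

/-- The bicharacteristics of the Hamiltonian `p(x,ξ) = x₂ ξ₁ |ξ|` with initial data
`X(0) = (0,1,0)`, `Ξ(0) = (λ,−λ,0)` satisfy `Ξ₂(t) = −λ sinh(λt+θ₀)` and
`y(X(t)) = cosh θ₀ / cosh(λt+θ₀)` with `θ₀ = sinh⁻¹ 1`; in particular `y(X(t))·|Ξ(t)|`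
is conserved. Here the components of `X` are `(X, Y, Z)` and those of `Ξ` are
`(Ξ₁, Ξ₂, Ξ₃)`, and `nrm t = |Ξ(t)|`. -/
theorem bicharacteristic_instability (lam : ℝ) (hlam : 0 < lam)
    (X Y Z Ξ1 Ξ2 Ξ3 nrm : ℝ → ℝ)
    (hnrm : ∀ t, nrm t = Real.sqrt (Ξ1 t ^ 2 + Ξ2 t ^ 2 + Ξ3 t ^ 2))
    -- Hamiltonian ODE: Ẋ = ∇_ξ p(X,Ξ)
    (hX : ∀ t, HasDerivAt X (Y t * (nrm t + Ξ1 t ^ 2 / nrm t)) t)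
    (hY : ∀ t, HasDerivAt Y (Y t * (Ξ1 t * Ξ2 t / nrm t)) t)
    (hZ : ∀ t, HasDerivAt Z (Y t * (Ξ1 t * Ξ3 t / nrm t)) t)
    -- Hamiltonian ODE: Ξ̇ = −∇_x p(X,Ξ)
    (hΞ1 : ∀ t, HasDerivAt Ξ1 0 t)
    (hΞ2 : ∀ t, HasDerivAt Ξ2 (-(Ξ1 t * nrm t)) t)
    (hΞ3 : ∀ t, HasDerivAt Ξ3 0 t)
    -- initial data
    (hX0 : X 0 = 0) (hY0 : Y 0 = 1) (hZ0 : Z 0 = 0)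
    (hΞ10 : Ξ1 0 = lam) (hΞ20 : Ξ2 0 = -lam) (hΞ30 : Ξ3 0 = 0) :
    ∀ t : ℝ,
      Ξ2 t = -lam * Real.sinh (lam * t + Real.arsinh 1) ∧
      Y t = Real.cosh (Real.arsinh 1) / Real.cosh (lam * t + Real.arsinh 1) ∧
      Y t * nrm t = Y 0 * nrm 0 :=
  bicharacteristic_instability_general lam hlam Y Ξ1 Ξ2 Ξ3 nrm hnrm hY hΞ1 hΞ2 hΞ3 hY0 hΞ10 hΞ20
    hΞ30
end
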